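/- arXiv:1904.04225 — 2 statements merged into one kernel-verified Lean document; each statement's English description precedes it below -/
import Mathlib

section
/- Suppose (p⁰, q⁰) is a competitive equilibrium with strictly positive traded quantity q⁰ > 0 (q⁰ maximizes ρ_{λg}(fun k => (g k − q)·π k) + q·p⁰ over q ≥ 0 and maximizes ρ_{λd}(fun k => (q − d k)·π k) − q·p⁰ over q ≥ 0). Then there exist weights θ : Fin K → ℝ with ∑_{k} θ k = 1 and λg/K ≤ θ k ≤ λg/K + (1−λg)/(K·(1−α)) for all k such that p⁰ = ∑_{k} θ k · π k, and likewise there exist weights θ' : Fin K → ℝ with ∑_{k} θ' k = 1 and λd/K ≤ θ' k ≤ λd/K + (1−λd)/(K·(1−α)) for all k such that p⁰ = ∑_{k} θ' k · π k. That is, the equilibrium forward price is a risk-adjusted expectation of the spot prices for both agents. -/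
/-!
CVaR, and hence `riskAdj`, is the minimum of the linear functionals `θ ⬝ᵥ ·` over a convex set of
weights (probability vectors with entries in a box); the minimum is attained at a weight putting
mass `1 / (K (1 - α))` on the worst scenarios. Comparing the optimal quantity `q₀ > 0` with
`q₀ + 1` and `q₀ / 2`, the weights supporting the objective there price `π` above and below `p₀`,
and a convex combination of them prices it exactly at `p₀`.
-/

open Finset

/-- Rockafellar–Uryasev representation of the (lower-tail) conditional value-at-risk
for `K` equally likely scenarios. -/
noncomputable def CVaR (K : ℕ) (α : ℝ) (x : Fin K → ℝ) : ℝ :=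
  sSup {v : ℝ | ∃ a : ℝ, v = a + (1 / (K * (1 - α))) * ∑ k, min (x k - a) 0}

/-- Risk-adjusted expected value: convex combination of expectation and CVaR. -/
noncomputable def riskAdj (K : ℕ) (α lam : ℝ) (x : Fin K → ℝ) : ℝ :=
  lam * ((1 / K) * ∑ k, x k) + (1 - lam) * CVaR K α x

def weightBox (ι : Type*) [Fintype ι] (lo hi : ℝ) : Set (ι → ℝ) :=
  {θ | ∑ i, θ i = 1 ∧ ∀ i, lo ≤ θ i ∧ θ i ≤ hi}

section WeightBox

variable {ι : Type*} [Fintype ι] {lo hi : ℝ}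

theorem convex_weightBox : Convex ℝ (weightBox ι lo hi) := by
  rintro θ ⟨hθ, hθb⟩ η ⟨hη, hηb⟩ s t hs ht hst
  refine ⟨?_, fun i => ?_⟩
  · simp only [Pi.add_apply, Pi.smul_apply, smul_eq_mul, sum_add_distrib, ← mul_sum, hθ, hη]
    linarith
  · simp only [Pi.add_apply, Pi.smul_apply, smul_eq_mul]
    have hcomb (r : ℝ) : s * r + t * r = r := by rw [← add_mul, hst, one_mul]
    obtain ⟨h₁, h₂⟩ := hθb i
    obtain ⟨h₃, h₄⟩ := hηb i
    constructor
    · linarith [hcomb lo, mul_le_mul_of_nonneg_left h₁ hs, mul_le_mul_of_nonneg_left h₃ ht]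
    · linarith [hcomb hi, mul_le_mul_of_nonneg_left h₂ hs, mul_le_mul_of_nonneg_left h₄ ht]

theorem comp_equiv_mem_weightBox {θ : ι → ℝ} (hθ : θ ∈ weightBox ι lo hi) (e : ι ≃ ι) :
    θ ∘ e ∈ weightBox ι lo hi :=
  ⟨by rw [← hθ.1]; exact e.sum_comp θ, fun i => hθ.2 (e i)⟩

theorem dotProduct_eq_add_sum_mul_sub {θ x : ι → ℝ} (hθ : ∑ i, θ i = 1) (a : ℝ) :
    θ ⬝ᵥ x = a + ∑ i, θ i * (x i - a) := by
  simp only [dotProduct, mul_sub, sum_sub_distrib, ← sum_mul, hθ]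
  ring

theorem exists_mem_dotProduct_eq {S : Set (ι → ℝ)} (hS : Convex ℝ S) {v θ₁ θ₂ : ι → ℝ} {c : ℝ}
    (h₁ : θ₁ ∈ S) (h₂ : θ₂ ∈ S) (hc₁ : θ₁ ⬝ᵥ v ≤ c) (hc₂ : c ≤ θ₂ ⬝ᵥ v) :
    ∃ θ ∈ S, θ ⬝ᵥ v = c := by
  have hconv : Convex ℝ ((· ⬝ᵥ v) '' S) :=
    hS.is_linear_image ⟨fun _ _ => add_dotProduct .., fun _ _ => smul_dotProduct ..⟩
  exact hconv.ordConnected.out ⟨θ₁, h₁, rfl⟩ ⟨θ₂, h₂, rfl⟩ ⟨hc₁, hc₂⟩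

end WeightBox

section FirstOrder

variable {ι : Type*} [Fintype ι] {φ : (ι → ℝ) → ℝ}

theorem sub_mul_dotProduct_sub_nonneg {θ x₀ x₁ v : ι → ℝ} {c q₀ q₁ : ℝ}
    (hx : x₀ = x₁ + (q₀ - q₁) • v) (hθx₁ : θ ⬝ᵥ x₁ ≤ φ x₁) (hθ : ∀ y, φ y ≤ θ ⬝ᵥ y)
    (hq : φ x₁ - q₁ * c ≤ φ x₀ - q₀ * c) :
    0 ≤ (q₀ - q₁) * (θ ⬝ᵥ v - c) := by
  subst hx
  have hθx₀ := hθ (x₁ + (q₀ - q₁) • v)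
  rw [dotProduct_add, dotProduct_smul, smul_eq_mul] at hθx₀
  linarith

theorem exists_dotProduct_eq_of_isMaxOn {S : Set (ι → ℝ)} (hS : Convex ℝ S)
    (hφ : ∀ x, ∃ θ ∈ S, θ ⬝ᵥ x ≤ φ x ∧ ∀ y, φ y ≤ θ ⬝ᵥ y)
    {x : ℝ → ι → ℝ} {v : ι → ℝ} (hx : ∀ q r, x q = x r + (q - r) • v) {c q₀ : ℝ} (hq₀ : 0 < q₀)
    (hmax : IsMaxOn (fun q => φ (x q) - q * c) (Set.Ici 0) q₀) :
    ∃ θ ∈ S, θ ⬝ᵥ v = c := by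
  rw [isMaxOn_iff] at hmax
  obtain ⟨θ₁, hθ₁S, hθ₁x, hθ₁⟩ := hφ (x (q₀ + 1))
  obtain ⟨θ₂, hθ₂S, hθ₂x, hθ₂⟩ := hφ (x (q₀ / 2))
  have h₁ := sub_mul_dotProduct_sub_nonneg (hx _ _) hθ₁x hθ₁
    (hmax _ (Set.mem_Ici.2 (by positivity)))
  have h₂ := sub_mul_dotProduct_sub_nonneg (hx _ _) hθ₂x hθ₂
    (hmax _ (Set.mem_Ici.2 (by positivity)))
  exact exists_mem_dotProduct_eq hS hθ₁S hθ₂S (by nlinarith) (by nlinarith)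

end FirstOrder

theorem exists_nat_lt_and_le_add_one {m : ℝ} (hm : 0 < m) {K : ℕ} (hmK : m ≤ K) :
    ∃ n : ℕ, (n : ℝ) < m ∧ m ≤ n + 1 ∧ n < K := by
  have hceil : 1 ≤ ⌈m⌉₊ := Nat.one_le_iff_ne_zero.2 (Nat.ceil_pos.2 hm).ne'
  refine ⟨⌈m⌉₊ - 1, ?_, ?_, ?_⟩
  · rw [Nat.cast_sub hceil, Nat.cast_one]
    linarith [Nat.ceil_lt_add_one hm.le]
  · rw [Nat.cast_sub hceil, Nat.cast_one]
    linarith [Nat.le_ceil m]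
  · have := Nat.ceil_le.2 hmK
    omega

noncomputable def cvarObjective (K : ℕ) (α : ℝ) (x : Fin K → ℝ) (a : ℝ) : ℝ :=
  a + (1 / (K * (1 - α))) * ∑ k, min (x k - a) 0

section CVaR

variable {K : ℕ} {α : ℝ}

theorem cvarObjective_le_dotProduct {x θ : Fin K → ℝ}
    (hθ : θ ∈ weightBox (Fin K) 0 (1 / (K * (1 - α)))) (a : ℝ) :
    cvarObjective K α x a ≤ θ ⬝ᵥ x := by
  rw [cvarObjective, dotProduct_eq_add_sum_mul_sub hθ.1 a, mul_sum]
  refine add_le_add le_rfl (sum_le_sum fun k _ => ?_)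
  obtain ⟨hθ₀, hθc⟩ := hθ.2 k
  calc 1 / (K * (1 - α)) * min (x k - a) 0
      ≤ θ k * min (x k - a) 0 := mul_le_mul_of_nonpos_right hθc (min_le_right _ _)
    _ ≤ θ k * (x k - a) := mul_le_mul_of_nonneg_left (min_le_left _ _) hθ₀

theorem CVaR_le_dotProduct {x θ : Fin K → ℝ}
    (hθ : θ ∈ weightBox (Fin K) 0 (1 / (K * (1 - α)))) :
    CVaR K α x ≤ θ ⬝ᵥ x :=
  csSup_le ⟨_, 0, rfl⟩ <| by
    rintro _ ⟨a, rfl⟩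
    exact cvarObjective_le_dotProduct hθ a

theorem const_mem_weightBox (hK : 1 ≤ K) (hα0 : 0 ≤ α) (hα1 : α < 1) :
    (fun _ => (1 / K : ℝ)) ∈ weightBox (Fin K) 0 (1 / (K * (1 - α))) := by
  have hKpos : (0 : ℝ) < K := by exact_mod_cast hK
  refine ⟨by simp [hKpos.ne'], fun _ => ⟨by positivity, ?_⟩⟩
  exact one_div_le_one_div_of_le (mul_pos hKpos (by linarith)) (by nlinarith)

theorem cvarObjective_le_CVaR (hK : 1 ≤ K) (hα0 : 0 ≤ α) (hα1 : α < 1) (x : Fin K → ℝ)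
    (a : ℝ) : cvarObjective K α x a ≤ CVaR K α x :=
  le_csSup ⟨_, by
    rintro _ ⟨b, rfl⟩
    exact cvarObjective_le_dotProduct (const_mem_weightBox hK hα0 hα1) b⟩ ⟨a, rfl⟩

theorem exists_mul_sub_eq_min_of_monotone (hK : 1 ≤ K) (hα0 : 0 ≤ α) (hα1 : α < 1)
    {y : Fin K → ℝ} (hy : Monotone y) :
    ∃ θ ∈ weightBox (Fin K) 0 (1 / (K * (1 - α))), ∃ a : ℝ,
      ∀ k, θ k * (y k - a) = 1 / (K * (1 - α)) * min (y k - a) 0 := by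
  set c := 1 / (K * (1 - α))
  have hm : (0 : ℝ) < K * (1 - α) := mul_pos (by exact_mod_cast hK) (by linarith)
  have hcm : c * (K * (1 - α)) = 1 := one_div_mul_cancel hm.ne'
  have hc0 : 0 < c := by positivity
  obtain ⟨n, hnm, hmn, hnK⟩ := exists_nat_lt_and_le_add_one hm (by nlinarith : K * (1 - α) ≤ K)
  let i₀ : Fin K := ⟨n, hnK⟩
  -- Full mass `c` on the `n` lowest outcomes and the remainder on the next one, `y i₀`: at the
  -- quantile `a = y i₀` each term of the objective is then tight.
  refine ⟨fun k => if k < i₀ then c else if k = i₀ then 1 - n * c else 0,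
    ⟨?_, fun k => ?_⟩, y i₀, fun k => ?_⟩
  · simp [sum_ite, filter_gt_eq_Iio, i₀]
  · have : (n : ℝ) * c ≤ 1 := by nlinarith
    have : 1 ≤ (n + 1) * c := by nlinarith
    dsimp only
    split_ifs <;> constructor <;> linarith
  · rcases lt_trichotomy k i₀ with h | rfl | h
    · simp [h, min_eq_left (sub_nonpos.2 (hy h.le))]
    · simp
    · simp [h.not_gt, h.ne', min_eq_right (sub_nonneg.2 (hy h.le))]

theorem exists_mul_sub_eq_min (hK : 1 ≤ K) (hα0 : 0 ≤ α) (hα1 : α < 1) (x : Fin K → ℝ) :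
    ∃ θ ∈ weightBox (Fin K) 0 (1 / (K * (1 - α))), ∃ a : ℝ,
      ∀ k, θ k * (x k - a) = 1 / (K * (1 - α)) * min (x k - a) 0 := by
  obtain ⟨θ, hθ, a, h⟩ :=
    exists_mul_sub_eq_min_of_monotone hK hα0 hα1 (Tuple.monotone_sort x)
  refine ⟨θ ∘ (Tuple.sort x).symm, comp_equiv_mem_weightBox hθ _, a, fun k => ?_⟩
  simpa using h ((Tuple.sort x).symm k)

theorem exists_dotProduct_le_CVaR (hK : 1 ≤ K) (hα0 : 0 ≤ α) (hα1 : α < 1) (x : Fin K → ℝ) :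
    ∃ θ ∈ weightBox (Fin K) 0 (1 / (K * (1 - α))), θ ⬝ᵥ x ≤ CVaR K α x := by
  obtain ⟨θ, hθ, a, h⟩ := exists_mul_sub_eq_min hK hα0 hα1 x
  refine ⟨θ, hθ, ?_⟩
  rw [dotProduct_eq_add_sum_mul_sub hθ.1 a, sum_congr rfl fun k _ => h k, ← mul_sum]
  exact cvarObjective_le_CVaR hK hα0 hα1 x a

end CVaR

noncomputable def riskWeight (K : ℕ) (lam : ℝ) (θ : Fin K → ℝ) : Fin K → ℝ :=
  fun k => lam / K + (1 - lam) * θ k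

section RiskAdj

variable {K : ℕ} {α lam : ℝ}

theorem riskWeight_dotProduct (θ y : Fin K → ℝ) :
    riskWeight K lam θ ⬝ᵥ y =
      lam * ((1 / K) * ∑ k, y k) + (1 - lam) * (θ ⬝ᵥ y) := by
  simp only [riskWeight, dotProduct, add_mul, sum_add_distrib, mul_sum, mul_assoc]
  congr 1
  exact sum_congr rfl fun k _ => by ring

theorem riskWeight_mem_weightBox (hK : 1 ≤ K) (hlam : lam ≤ 1) {θ : Fin K → ℝ} {hi : ℝ}
    (hθ : θ ∈ weightBox (Fin K) 0 hi) :
    riskWeight K lam θ ∈ weightBox (Fin K) (lam / K) (lam / K + (1 - lam) * hi) := by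
  have hKpos : (0 : ℝ) < K := by exact_mod_cast hK
  unfold riskWeight
  refine ⟨?_, fun k => ⟨?_, ?_⟩⟩
  · simp only [sum_add_distrib, ← mul_sum, hθ.1, sum_const, card_univ, Fintype.card_fin,
      nsmul_eq_mul, mul_div_cancel₀ _ hKpos.ne']
    ring
  · have := mul_nonneg (sub_nonneg.2 hlam) (hθ.2 k).1
    linarith
  · have := mul_le_mul_of_nonneg_left (hθ.2 k).2 (sub_nonneg.2 hlam)
    linarith

theorem exists_supporting_riskAdj (hK : 1 ≤ K) (hα0 : 0 ≤ α) (hα1 : α < 1) (hlam : lam ≤ 1)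
    (x : Fin K → ℝ) :
    ∃ θ ∈ weightBox (Fin K) (lam / K) (lam / K + (1 - lam) / (K * (1 - α))),
      θ ⬝ᵥ x ≤ riskAdj K α lam x ∧ ∀ y, riskAdj K α lam y ≤ θ ⬝ᵥ y := by
  obtain ⟨θ, hθ, hθx⟩ := exists_dotProduct_le_CVaR hK hα0 hα1 x
  have hmem := riskWeight_mem_weightBox hK hlam hθ
  rw [mul_one_div] at hmem
  refine ⟨riskWeight K lam θ, hmem, ?_, fun y => ?_⟩
  · rw [riskWeight_dotProduct, riskAdj]
    gcongr
  · rw [riskWeight_dotProduct, riskAdj]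
    gcongr
    exact CVaR_le_dotProduct hθ

end RiskAdj

/-- At a competitive equilibrium with strictly positive traded quantity, the forward price
is a risk-adjusted expectation of the spot prices for both the generator and the load:
`p⁰ = ∑ₖ θ k · π k` for dual weights `θ` in each agent's risk envelope. -/
theorem equilibrium_price_is_risk_adjusted_expectation (K : ℕ) (hK : 1 ≤ K)
    (α : ℝ) (hα0 : 0 ≤ α) (hα1 : α < 1)
    (lamg lamd : ℝ) (hlamg : 0 ≤ lamg ∧ lamg ≤ 1) (hlamd : 0 ≤ lamd ∧ lamd ≤ 1)
    (g d π : Fin K → ℝ) (p₀ q₀ : ℝ) (hq₀ : 0 < q₀)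
    (hgen : ∀ q : ℝ, 0 ≤ q →
      riskAdj K α lamg (fun k => (g k - q) * π k) + q * p₀ ≤
        riskAdj K α lamg (fun k => (g k - q₀) * π k) + q₀ * p₀)
    (hload : ∀ q : ℝ, 0 ≤ q →
      riskAdj K α lamd (fun k => (q - d k) * π k) - q * p₀ ≤
        riskAdj K α lamd (fun k => (q₀ - d k) * π k) - q₀ * p₀) :
    (∃ θ : Fin K → ℝ, (∑ k, θ k) = 1 ∧
      (∀ k, lamg / K ≤ θ k ∧ θ k ≤ lamg / K + (1 - lamg) / (K * (1 - α))) ∧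
      p₀ = ∑ k, θ k * π k) ∧
    (∃ θ' : Fin K → ℝ, (∑ k, θ' k) = 1 ∧
      (∀ k, lamd / K ≤ θ' k ∧ θ' k ≤ lamd / K + (1 - lamd) / (K * (1 - α))) ∧
      p₀ = ∑ k, θ' k * π k) := by
  obtain ⟨θ, ⟨hθsum, hθbox⟩, hθπ⟩ :=
    exists_dotProduct_eq_of_isMaxOn (x := fun q k => (g k - q) * π k) (v := -π) (c := -p₀)
      convex_weightBox (exists_supporting_riskAdj hK hα0 hα1 hlamg.2)
      (fun q r => by
        ext k; simp only [Pi.add_apply, Pi.smul_apply, Pi.neg_apply, smul_eq_mul]; ring)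
      hq₀ (isMaxOn_iff.2 fun q hq => by linarith [hgen q hq])
  obtain ⟨θ', ⟨hθ'sum, hθ'box⟩, hθ'π⟩ :=
    exists_dotProduct_eq_of_isMaxOn (x := fun q k => (q - d k) * π k) (v := π) (c := p₀)
      convex_weightBox (exists_supporting_riskAdj hK hα0 hα1 hlamd.2)
      (fun q r => by ext k; simp only [Pi.add_apply, Pi.smul_apply, smul_eq_mul]; ring)
      hq₀ (isMaxOn_iff.2 fun q hq => by linarith [hload q hq])
  rw [dotProduct_neg, neg_inj] at hθπ
  exact ⟨⟨θ, hθsum, hθbox, hθπ.symm⟩, ⟨θ', hθ'sum, hθ'box, hθ'π.symm⟩⟩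
end

section
/- Strong duality for the load's contracting problem: fix d, π : Fin K → ℝ, λ ∈ [0,1], α ∈ [0,1), p ∈ ℝ, and let Θ = { θ : Fin K → ℝ | ∑_{k} θ k = 1 and λ/K ≤ θ k ≤ λ/K + (1−λ)/(K·(1−α)) for all k }. If there exists θ ∈ Θ with ∑_{k} θ k · π k ≤ p, then sup_{q ≥ 0} [ ρ_λ(fun k => (q − d k)·π k) − q·p ] = min { −∑_{k} θ k · π k · d k | θ ∈ Θ, ∑_{k} θ k · π k ≤ p }, and the minimum on the right-hand side is attained. If no θ ∈ Θ satisfies ∑_{k} θ k · π k ≤ p, then the supremum on the left-hand side is +∞. -/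
/-!
By the dual representation of CVaR, `riskAdj K α lam x` is the minimum of `∑ k, θ k * x k` over
the risk envelope `Θ`, attained at `θ = lam / K + (1 - lam) • μ` where `μ` puts the maximal weight
`1 / (K * (1 - α))` on the scenarios below a quantile of `x`. Hence the load's objective at `q ≥ 0`
is `min_{θ ∈ Θ} (q * (∑ θ π - p) - ∑ θ π d)`, the Lagrangian of the problem in `θ`, and the
theorem is Lagrangian duality for one inequality constraint. Via `θ ↦ (∑ θ π, -∑ θ π d)` this is a
statement about a compact convex set `C ⊆ ℝ²`: for `B` below the dual value, a line separating
`C` from the quadrant `(-∞, p] × (-∞, B]` has slope `-q` for a multiplier `q ≥ 0`. When that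
line is vertical, or the dual is infeasible, `C` lies strictly right of `p` and, by compactness,
every large `q` works.
-/

open Finset

section RockafellarUryasev

variable {ι : Type*} [Fintype ι]

def rockafellarUryasev (c : ℝ) (x : ι → ℝ) (a : ℝ) : ℝ :=
  a + c * ∑ k, min (x k - a) 0

theorem mul_rockafellarUryasev_le_sum_mul {c s : ℝ} {x ν : ι → ℝ}
    (hν : ∀ k, 0 ≤ ν k ∧ ν k ≤ s * c) (hsum : ∑ k, ν k = s) (a : ℝ) :
    s * rockafellarUryasev c x a ≤ ∑ k, ν k * x k := by
  have hpt : ∀ k, s * c * min (x k - a) 0 ≤ ν k * (x k - a) := by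
    intro k
    rcases le_total 0 (x k - a) with h | h
    · rw [min_eq_right h, mul_zero]
      exact mul_nonneg (hν k).1 h
    · rw [min_eq_left h]
      exact mul_le_mul_of_nonpos_right (hν k).2 h
  calc s * rockafellarUryasev c x a = ∑ k, (ν k * a + s * c * min (x k - a) 0) := by
        rw [sum_add_distrib, ← sum_mul, hsum, ← mul_sum, rockafellarUryasev]; ring
    _ ≤ ∑ k, (ν k * a + ν k * (x k - a)) := sum_le_sum fun k _ => add_le_add_right (hpt k) _
    _ = ∑ k, ν k * x k := by congr! 1 with k; ring

theorem exists_quantile_threshold {c : ℝ} (hc : 1 ≤ c * Fintype.card ι) (x : ι → ℝ) :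
    ∃ t, c * #{k | x k < t} < 1 ∧ 1 ≤ c * #{k | x k ≤ t} := by
  have hc0 : 0 < c := by
    by_contra! h
    nlinarith [(Nat.cast_nonneg (Fintype.card ι) : (0 : ℝ) ≤ _)]
  have hι : (univ : Finset ι).Nonempty := by
    rw [univ_nonempty_iff, ← Fintype.card_pos_iff]
    by_contra! h
    norm_num [Nat.le_zero.mp h] at hc
  set S : Finset ι := {j | 1 ≤ c * #{k | x k ≤ x j}}
  have hS : S.Nonempty := by
    obtain ⟨j, -, hj⟩ := exists_max_image univ x hι
    refine ⟨j, mem_filter.mpr ⟨mem_univ _, ?_⟩⟩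
    rwa [filter_true_of_mem fun k _ => hj k (mem_univ k), card_univ]
  obtain ⟨j, hjS, hjmin⟩ := exists_min_image S x hS
  refine ⟨x j, ?_, (mem_filter.mp hjS).2⟩
  by_contra! hlt
  have hA : ({k | x k < x j} : Finset ι).Nonempty := by
    rw [← card_pos]
    by_contra! h
    norm_num [Nat.le_zero.mp h] at hlt
  obtain ⟨i, hiA, himax⟩ := exists_max_image _ x hA
  have hiS : i ∈ S := by
    refine mem_filter.mpr ⟨mem_univ _, hlt.trans ?_⟩
    gcongr with k
    exact fun hk => himax k (by simpa using hk)
  exact (hjmin i hiS).not_gt (mem_filter.mp hiA).2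

theorem exists_sum_mul_eq_rockafellarUryasev {c t : ℝ} {x : ι → ℝ}
    (hlt : c * #{k | x k < t} < 1) (hle : 1 ≤ c * #{k | x k ≤ t}) :
    ∃ μ : ι → ℝ, (∀ k, 0 ≤ μ k ∧ μ k ≤ c) ∧ ∑ k, μ k = 1 ∧
      ∑ k, μ k * x k = rockafellarUryasev c x t := by
  set nA : ℝ := ((#{k | x k < t} : ℕ) : ℝ)
  set nE : ℝ := ((#{k | x k = t} : ℕ) : ℝ)
  have hcard : (#{k | x k ≤ t} : ℝ) = nA + nE := by
    simp only [nA, nE, ← sum_boole, ← sum_add_distrib]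
    refine sum_congr rfl fun k _ => ?_
    rcases lt_trichotomy (x k) t with h | h | h
    · simp [h, h.le, h.ne]
    · simp [h]
    · simp [not_le.mpr h, not_lt.mpr h.le, h.ne']
  have hc0 : 0 ≤ c := by
    by_contra! h
    nlinarith [(Nat.cast_nonneg _ : (0 : ℝ) ≤ #{k | x k ≤ t})]
  rw [hcard, mul_add] at hle
  have hE : 0 < nE := pos_of_mul_pos_right (by linarith) hc0
  set w := (1 - c * nA) / nE
  set μ : ι → ℝ := fun k => c * (if x k < t then 1 else 0) + w * (if x k = t then 1 else 0)
  have hsum : ∑ k, μ k = 1 := by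
    simp only [μ, sum_add_distrib, ← mul_sum, sum_boole]
    change c * nA + w * nE = 1
    rw [div_mul_cancel₀ _ hE.ne']
    ring
  have hpt : ∀ k, μ k * (x k - t) = c * min (x k - t) 0 := by
    intro k
    rcases lt_trichotomy (x k) t with h | h | h
    · simp [μ, h, h.ne, min_eq_left (sub_nonpos.mpr h.le)]
    · simp [μ, h]
    · simp [μ, not_lt.mpr h.le, h.ne', min_eq_right (sub_nonneg.mpr h.le)]
  refine ⟨μ, fun k => ?_, hsum, ?_⟩
  · rcases lt_trichotomy (x k) t with h | h | h
    · simpa [μ, h, h.ne] using hc0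
    · simp only [μ, h, lt_irrefl, if_false, if_true, mul_zero, zero_add, mul_one]
      exact ⟨div_nonneg (by linarith) hE.le, (div_le_iff₀ hE).mpr (by linarith)⟩
    · simpa [μ, not_lt.mpr h.le, h.ne'] using hc0
  · calc ∑ k, μ k * x k = ∑ k, (μ k * (x k - t) + μ k * t) := by congr! 1 with k; ring
      _ = rockafellarUryasev c x t := by
        rw [sum_add_distrib, ← sum_mul, hsum, sum_congr rfl fun k _ => hpt k, ← mul_sum,
          rockafellarUryasev]
        ring

theorem exists_isGreatest_range_rockafellarUryasev {c : ℝ} (hc : 1 ≤ c * Fintype.card ι)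
    (x : ι → ℝ) :
    ∃ μ : ι → ℝ, (∀ k, 0 ≤ μ k ∧ μ k ≤ c) ∧ ∑ k, μ k = 1 ∧
      IsGreatest (Set.range (rockafellarUryasev c x)) (∑ k, μ k * x k) := by
  obtain ⟨t, hlt, hle⟩ := exists_quantile_threshold hc x
  obtain ⟨μ, hμ, hsum, heq⟩ := exists_sum_mul_eq_rockafellarUryasev hlt hle
  refine ⟨μ, hμ, hsum, ⟨t, heq.symm⟩, ?_⟩
  rintro _ ⟨a, rfl⟩
  simpa using mul_rockafellarUryasev_le_sum_mul (s := 1) (by simpa using hμ) hsum a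

end RockafellarUryasev

def riskEnvelope (K : ℕ) (α lam : ℝ) : Set (Fin K → ℝ) :=
  {θ | ∑ k, θ k = 1} ∩
    Set.univ.pi fun _ => Set.Icc (lam / K) (lam / K + (1 - lam) / (K * (1 - α)))

theorem mem_riskEnvelope {K : ℕ} {α lam : ℝ} {θ : Fin K → ℝ} :
    θ ∈ riskEnvelope K α lam ↔
      ∑ k, θ k = 1 ∧ ∀ k, lam / K ≤ θ k ∧ θ k ≤ lam / K + (1 - lam) / (K * (1 - α)) := by
  simp only [riskEnvelope, Set.mem_inter_iff, Set.mem_ofPred_eq, Set.mem_pi, Set.mem_univ,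
    true_implies, Set.mem_Icc]

theorem isCompact_riskEnvelope (K : ℕ) (α lam : ℝ) : IsCompact (riskEnvelope K α lam) :=
  (isCompact_univ_pi fun _ => isCompact_Icc).inter_left
    (isClosed_eq (continuous_finsetSum _ fun k _ => continuous_apply k) continuous_const)

theorem convex_riskEnvelope (K : ℕ) (α lam : ℝ) : Convex ℝ (riskEnvelope K α lam) :=
  (convex_hyperplane ⟨fun _ _ => sum_add_distrib, fun _ _ => by simp [mul_sum]⟩ 1).inter
    (convex_pi fun _ _ => convex_Icc _ _)

theorem exists_isGreatest_CVaR {K : ℕ} (hK : 1 ≤ K) {α : ℝ} (hα0 : 0 ≤ α) (hα1 : α < 1)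
    (x : Fin K → ℝ) :
    ∃ μ : Fin K → ℝ, (∀ k, 0 ≤ μ k ∧ μ k ≤ 1 / (K * (1 - α))) ∧ ∑ k, μ k = 1 ∧
      CVaR K α x = ∑ k, μ k * x k ∧
      IsGreatest (Set.range (rockafellarUryasev (1 / (K * (1 - α))) x)) (CVaR K α x) := by
  have hc : 1 ≤ 1 / (K * (1 - α)) * Fintype.card (Fin K) := by
    have hKpos : (0 : ℝ) < K := by exact_mod_cast hK
    rw [Fintype.card_fin, div_mul_eq_mul_div, one_mul, le_div_iff₀ (by nlinarith)]
    nlinarith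
  obtain ⟨μ, hμ, hμsum, hμmax⟩ := exists_isGreatest_range_rockafellarUryasev hc x
  have hCVaR : CVaR K α x = ∑ k, μ k * x k := by
    simp only [CVaR, ← hμmax.csSup_eq, rockafellarUryasev, Set.range, eq_comm]
  exact ⟨μ, hμ, hμsum, hCVaR, hCVaR ▸ hμmax⟩

theorem isLeast_riskAdj {K : ℕ} (hK : 1 ≤ K) {α : ℝ} (hα0 : 0 ≤ α) (hα1 : α < 1)
    {lam : ℝ} (hlam1 : lam ≤ 1) (x : Fin K → ℝ) :
    IsLeast ((fun θ => ∑ k, θ k * x k) '' riskEnvelope K α lam) (riskAdj K α lam x) := by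
  set c : ℝ := 1 / (K * (1 - α))
  have hKpos : (0 : ℝ) < K := by exact_mod_cast hK
  have hcap : (1 - lam) / (K * (1 - α)) = (1 - lam) * c := (mul_one_div _ _).symm
  obtain ⟨μ, hμ, hμsum, hCVaR, ⟨a, ha⟩, -⟩ := exists_isGreatest_CVaR hK hα0 hα1 x
  have hriskAdj : riskAdj K α lam x = lam / K * ∑ k, x k + (1 - lam) * CVaR K α x := by
    rw [riskAdj]
    ring
  refine ⟨⟨fun k => lam / K + (1 - lam) * μ k,
    mem_riskEnvelope.mpr ⟨?_, fun k => ⟨?_, ?_⟩⟩, ?_⟩, ?_⟩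
  · rw [sum_add_distrib, ← mul_sum, hμsum, sum_const, card_univ, Fintype.card_fin, nsmul_eq_mul]
    field_simp
    ring
  · nlinarith [(hμ k).1]
  · nlinarith [(hμ k).2]
  · simp only [add_mul, sum_add_distrib, ← mul_sum, mul_assoc, hriskAdj, hCVaR]
  · rintro _ ⟨θ, hθ, rfl⟩
    obtain ⟨hθsum, hθ⟩ := mem_riskEnvelope.mp hθ
    have hν : ∀ k, 0 ≤ θ k - lam / K ∧ θ k - lam / K ≤ (1 - lam) * c := fun k => by
      constructor <;> linarith [hθ k]
    have hνsum : ∑ k, (θ k - lam / K) = 1 - lam := by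
      rw [sum_sub_distrib, hθsum, sum_const, card_univ, Fintype.card_fin, nsmul_eq_mul]
      field_simp
    have hweak := mul_rockafellarUryasev_le_sum_mul hν hνsum a (x := x)
    rw [ha] at hweak
    simp only [sub_mul, sum_sub_distrib, ← mul_sum] at hweak
    rw [hriskAdj]
    linarith

section LagrangeDuality

variable {C : Set (ℝ × ℝ)} {p : ℝ}

theorem strongDual_prod_apply (f : StrongDual ℝ (ℝ × ℝ)) (z : ℝ × ℝ) :
    f z = z.1 * f (1, 0) + z.2 * f (0, 1) := by
  conv_lhs => rw [show z = z.1 • ((1 : ℝ), (0 : ℝ)) + z.2 • ((0 : ℝ), (1 : ℝ)) by ext <;> simp]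
  rw [map_add, map_smul, map_smul, smul_eq_mul, smul_eq_mul]

theorem nonneg_of_forall_lt_add_mul {a b v : ℝ} (h : ∀ s, 0 ≤ s → v < a + s * b) :
    0 ≤ b := by
  by_contra! hb
  have := h ((a - v) / -b) (div_nonneg (by linarith [h 0 le_rfl]) (by linarith))
  rw [div_neg, neg_mul, div_mul_cancel₀ _ hb.ne] at this
  linarith

theorem exists_lagrange_multiplier_of_forall_lt_fst (hC : IsCompact C) (h : ∀ z ∈ C, p < z.1)
    (B : ℝ) : ∃ q, 0 ≤ q ∧ ∀ z ∈ C, B < q * (z.1 - p) + z.2 := by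
  obtain ⟨δ, hδ, hδC⟩ := hC.exists_forall_le' (f := fun z : ℝ × ℝ => z.1 - p)
    (by fun_prop) fun z hz => sub_pos.mpr (h z hz)
  obtain ⟨m, hm⟩ := (hC.image continuous_snd).bddBelow
  set q := |B - m| / δ + 1
  have hq : 0 ≤ q := by positivity
  refine ⟨q, hq, fun z hz => ?_⟩
  have h1 : q * δ ≤ q * (z.1 - p) := mul_le_mul_of_nonneg_left (hδC z hz) hq
  have h2 : m ≤ z.2 := hm ⟨z, hz, rfl⟩
  have h3 : q * δ = |B - m| + δ := by simp only [q]; field_simp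
  linarith [le_abs_self (B - m)]

theorem exists_lagrange_multiplier (hCc : IsCompact C) (hCv : Convex ℝ C) {B : ℝ}
    (h : ∀ z ∈ C, z.1 ≤ p → B < z.2) :
    ∃ q, 0 ≤ q ∧ ∀ z ∈ C, B < q * (z.1 - p) + z.2 := by
  have hdisj : Disjoint C (Set.Iic p ×ˢ Set.Iic B) :=
    Set.disjoint_left.mpr fun z hz hzD => (h z hz hzD.1).not_ge hzD.2
  obtain ⟨f, u, v, hfC, huv, hfD⟩ := geometric_hahn_banach_compact_closed hCv hCc
    ((convex_Iic p).prod (convex_Iic B)) (isClosed_Iic.prod isClosed_Iic) hdisj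
  set a := f (1, 0)
  set b := f (0, 1)
  have hf := strongDual_prod_apply f
  have hapex := hfD (p, B) (by simp)
  have hsep : ∀ z ∈ C, (z.1 - p) * a + (z.2 - B) * b < 0 := fun z hz => by
    have := hfC z hz
    rw [hf] at this hapex
    linarith
  -- The quadrant is unbounded below in both coordinates, while `f > v` on it.
  have ha : a ≤ 0 := by
    have := nonneg_of_forall_lt_add_mul (a := f (p, B)) (b := -a) (v := v) fun s hs => by
      have := hfD (p - s, B) (by simp [hs])
      rw [hf] at this ⊢
      linarith
    linarith
  have hb : b ≤ 0 := by
    have := nonneg_of_forall_lt_add_mul (a := f (p, B)) (b := -b) (v := v) fun s hs => by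
      have := hfD (p, B - s) (by simp [hs])
      rw [hf] at this ⊢
      linarith
    linarith
  rcases hb.lt_or_eq with hb | hb
  · refine ⟨a / b, div_nonneg_of_nonpos ha hb.le, fun z hz => ?_⟩
    have : b * (a / b * (z.1 - p) + z.2 - B) < 0 := by
      rw [mul_sub, mul_add, ← mul_assoc, mul_div_cancel₀ _ hb.ne]
      linarith [hsep z hz]
    linarith [pos_of_mul_neg_right this hb.le]
  · -- A vertical separating line leaves `C` strictly to the right of `p`.
    refine exists_lagrange_multiplier_of_forall_lt_fst hCc (fun z hz => ?_) B
    by_contra! hzp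
    have := hsep z hz
    rw [hb, mul_zero, add_zero] at this
    linarith [mul_nonneg_of_nonpos_of_nonpos (sub_nonpos.mpr hzp) ha]

theorem exists_isLeast_and_isLUB_of_isLeast_lagrangian (hCc : IsCompact C) (hCv : Convex ℝ C)
    {g : ℝ → ℝ} (hg : ∀ q, 0 ≤ q → IsLeast ((fun z => q * (z.1 - p) + z.2) '' C) (g q))
    (hfeas : ∃ z ∈ C, z.1 ≤ p) :
    ∃ V, IsLeast (Prod.snd '' (C ∩ {z | z.1 ≤ p})) V ∧ IsLUB (g '' Set.Ici 0) V := by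
  obtain ⟨z, hzC, hzp⟩ := hfeas
  obtain ⟨_, ⟨z₀, ⟨hz₀C, hz₀p⟩, rfl⟩, hVle⟩ :=
    ((hCc.inter_right (isClosed_le continuous_fst continuous_const)).image
      continuous_snd).exists_isLeast ⟨z.2, z, ⟨hzC, hzp⟩, rfl⟩
  refine ⟨z₀.2, ⟨⟨z₀, ⟨hz₀C, hz₀p⟩, rfl⟩, hVle⟩, ?_, fun B hB => ?_⟩
  · rintro _ ⟨q, hq, rfl⟩
    calc g q ≤ q * (z₀.1 - p) + z₀.2 := (hg q hq).2 ⟨z₀, hz₀C, rfl⟩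
      _ ≤ z₀.2 := by
        have : q * (z₀.1 - p) ≤ 0 := mul_nonpos_of_nonneg_of_nonpos hq (sub_nonpos.mpr hz₀p)
        linarith
  · by_contra! hBV
    obtain ⟨q, hq, hqC⟩ := exists_lagrange_multiplier hCc hCv (p := p) (B := B)
      fun z hz hzp => hBV.trans_le (hVle ⟨z, ⟨hz, hzp⟩, rfl⟩)
    obtain ⟨z, hz, hzg⟩ := (hg q hq).1
    exact (hqC z hz).not_ge (hzg.trans_le (hB ⟨q, hq, rfl⟩))

theorem not_bddAbove_image_Ici_of_isLeast_lagrangian (hCc : IsCompact C)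
    {g : ℝ → ℝ} (hg : ∀ q, 0 ≤ q → IsLeast ((fun z => q * (z.1 - p) + z.2) '' C) (g q))
    (hC : ∀ z ∈ C, p < z.1) : ¬ BddAbove (g '' Set.Ici 0) := by
  rintro ⟨B, hB⟩
  obtain ⟨q, hq, hqC⟩ := exists_lagrange_multiplier_of_forall_lt_fst hCc hC B
  obtain ⟨z, hz, hzg⟩ := (hg q hq).1
  exact (hqC z hz).not_ge (hzg.trans_le (hB ⟨q, hq, rfl⟩))

end LagrangeDuality

section Load

variable {K : ℕ} (π d : Fin K → ℝ)

def priceCostPair (θ : Fin K → ℝ) : ℝ × ℝ :=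
  (∑ k, θ k * π k, -∑ k, θ k * π k * d k)

theorem isCompact_image_priceCostPair (α lam : ℝ) :
    IsCompact (priceCostPair π d '' riskEnvelope K α lam) :=
  (isCompact_riskEnvelope K α lam).image (by unfold priceCostPair; fun_prop)

theorem convex_image_priceCostPair (α lam : ℝ) :
    Convex ℝ (priceCostPair π d '' riskEnvelope K α lam) :=
  (convex_riskEnvelope K α lam).is_linear_image
    ⟨fun _ _ => by simp [priceCostPair, add_mul, sum_add_distrib, add_comm],
      fun _ _ => by simp [priceCostPair, mul_sum, mul_assoc]⟩

theorem isLeast_lagrangian_image_priceCostPair (hK : 1 ≤ K) {α : ℝ} (hα0 : 0 ≤ α)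
    (hα1 : α < 1) {lam : ℝ} (hlam1 : lam ≤ 1) (q p : ℝ) :
    IsLeast ((fun z => q * (z.1 - p) + z.2) '' (priceCostPair π d '' riskEnvelope K α lam))
      (riskAdj K α lam (fun k => (q - d k) * π k) - q * p) := by
  have hL : (fun z : ℝ × ℝ => q * (z.1 - p) + z.2) ''
        (priceCostPair π d '' riskEnvelope K α lam) = (fun y => y - q * p) ''
        ((fun θ => ∑ k, θ k * ((q - d k) * π k)) '' riskEnvelope K α lam) := by
    rw [Set.image_image, Set.image_image]
    congr! 1 with θ
    have hterm : ∀ k, θ k * ((q - d k) * π k) = q * (θ k * π k) - θ k * π k * d k :=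
      fun k => by ring
    simp only [priceCostPair, hterm, sum_sub_distrib, ← mul_sum]
    ring
  rw [hL]
  exact Monotone.map_isLeast (fun _ _ h => sub_le_sub_right h _)
    (isLeast_riskAdj hK hα0 hα1 hlam1 fun k => (q - d k) * π k)

end Load

theorem load_strong_duality_general (K : ℕ) (hK : 1 ≤ K)
    (α : ℝ) (hα0 : 0 ≤ α) (hα1 : α < 1)
    (lam : ℝ) (hlam1 : lam ≤ 1)
    (d π : Fin K → ℝ) (p : ℝ) :
    ((∃ θ : Fin K → ℝ, (∑ k, θ k) = 1 ∧
        (∀ k, lam / K ≤ θ k ∧ θ k ≤ lam / K + (1 - lam) / (K * (1 - α))) ∧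
        (∑ k, θ k * π k) ≤ p) →
      ∃ V : ℝ,
        IsLeast
          {v : ℝ | ∃ θ : Fin K → ℝ, (∑ k, θ k) = 1 ∧
            (∀ k, lam / K ≤ θ k ∧ θ k ≤ lam / K + (1 - lam) / (K * (1 - α))) ∧
            (∑ k, θ k * π k) ≤ p ∧ v = -∑ k, θ k * π k * d k} V ∧
        IsLUB
          {v : ℝ | ∃ q : ℝ, 0 ≤ q ∧
            v = riskAdj K α lam (fun k => (q - d k) * π k) - q * p} V) ∧
    ((¬ ∃ θ : Fin K → ℝ, (∑ k, θ k) = 1 ∧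
        (∀ k, lam / K ≤ θ k ∧ θ k ≤ lam / K + (1 - lam) / (K * (1 - α))) ∧
        (∑ k, θ k * π k) ≤ p) →
      ¬ BddAbove
        {v : ℝ | ∃ q : ℝ, 0 ≤ q ∧
          v = riskAdj K α lam (fun k => (q - d k) * π k) - q * p}) := by
  set C := priceCostPair π d '' riskEnvelope K α lam
  set g := fun q => riskAdj K α lam (fun k => (q - d k) * π k) - q * p
  have hCc : IsCompact C := isCompact_image_priceCostPair π d α lam
  have hg : ∀ q, 0 ≤ q → IsLeast ((fun z => q * (z.1 - p) + z.2) '' C) (g q) :=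
    fun q _ => isLeast_lagrangian_image_priceCostPair π d hK hα0 hα1 hlam1 q p
  have hprimal : {v | ∃ q, 0 ≤ q ∧ v = g q} = g '' Set.Ici 0 := by
    ext
    simp [eq_comm]
  have hdual : {v | ∃ θ : Fin K → ℝ, (∑ k, θ k) = 1 ∧
      (∀ k, lam / K ≤ θ k ∧ θ k ≤ lam / K + (1 - lam) / (K * (1 - α))) ∧
      (∑ k, θ k * π k) ≤ p ∧ v = -∑ k, θ k * π k * d k} =
      Prod.snd '' (C ∩ {z | z.1 ≤ p}) := by
    ext
    constructor
    · rintro ⟨θ, hθsum, hθbox, hθp, rfl⟩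
      exact ⟨_, ⟨⟨θ, mem_riskEnvelope.mpr ⟨hθsum, hθbox⟩, rfl⟩, hθp⟩, rfl⟩
    · rintro ⟨_, ⟨⟨θ, hθ, rfl⟩, hθp⟩, rfl⟩
      exact ⟨θ, (mem_riskEnvelope.mp hθ).1, (mem_riskEnvelope.mp hθ).2, hθp, rfl⟩
  rw [hprimal, hdual]
  refine ⟨fun ⟨θ, hθsum, hθbox, hθp⟩ => ?_, fun hinfeas => ?_⟩
  · exact exists_isLeast_and_isLUB_of_isLeast_lagrangian hCc
      (convex_image_priceCostPair π d α lam) hg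
      ⟨_, ⟨θ, mem_riskEnvelope.mpr ⟨hθsum, hθbox⟩, rfl⟩, hθp⟩
  · refine not_bddAbove_image_Ici_of_isLeast_lagrangian hCc hg ?_
    rintro _ ⟨θ, hθ, rfl⟩
    exact not_le.mp fun hθp =>
      hinfeas ⟨θ, (mem_riskEnvelope.mp hθ).1, (mem_riskEnvelope.mp hθ).2, hθp⟩

/-- Strong duality for the load's contracting problem (primal-dual equality (36)):
if the dual feasible set `{θ ∈ Θ | ∑ₖ θ k · π k ≤ p}` is nonempty, the supremum of the
load's objective over `q ≥ 0` equals the attained minimum of `−∑ₖ θ k · π k · d k`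
over it; otherwise the load's objective is unbounded above. -/
theorem load_strong_duality (K : ℕ) (hK : 1 ≤ K)
    (α : ℝ) (hα0 : 0 ≤ α) (hα1 : α < 1)
    (lam : ℝ) (hlam0 : 0 ≤ lam) (hlam1 : lam ≤ 1)
    (d π : Fin K → ℝ) (p : ℝ) :
    ((∃ θ : Fin K → ℝ, (∑ k, θ k) = 1 ∧
        (∀ k, lam / K ≤ θ k ∧ θ k ≤ lam / K + (1 - lam) / (K * (1 - α))) ∧
        (∑ k, θ k * π k) ≤ p) →
      ∃ V : ℝ,
        IsLeast
          {v : ℝ | ∃ θ : Fin K → ℝ, (∑ k, θ k) = 1 ∧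
            (∀ k, lam / K ≤ θ k ∧ θ k ≤ lam / K + (1 - lam) / (K * (1 - α))) ∧
            (∑ k, θ k * π k) ≤ p ∧ v = -∑ k, θ k * π k * d k} V ∧
        IsLUB
          {v : ℝ | ∃ q : ℝ, 0 ≤ q ∧
            v = riskAdj K α lam (fun k => (q - d k) * π k) - q * p} V) ∧
    ((¬ ∃ θ : Fin K → ℝ, (∑ k, θ k) = 1 ∧
        (∀ k, lam / K ≤ θ k ∧ θ k ≤ lam / K + (1 - lam) / (K * (1 - α))) ∧
        (∑ k, θ k * π k) ≤ p) →
      ¬ BddAbove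
        {v : ℝ | ∃ q : ℝ, 0 ≤ q ∧
          v = riskAdj K α lam (fun k => (q - d k) * π k) - q * p}) :=
  load_strong_duality_general K hK α hα0 hα1 lam hlam1 d π p
end
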